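/- (Separation of rays and tangent segments in the plane.) Let j ≥ 0 be an integer, set h = (1/2)^{(3/2)^{j+1}}, and let t ∈ [0, (1/2)^{(3/2)^j}], s ∈ [1,2], γ > 0. If t + s = γ(t + h + 1), then γ((t+h)² + 2(t+h)) > t² + 2ts. Consequently, the ray L_{1, t+h} = {γ(t + h + 1, (t+h)² + 2(t+h)) : γ > 0} is disjoint from the segment L_{2,t} = {σ(1, 2t) + (t+1, t² + 2t) : σ ∈ [0,1]}. -/

import Mathlib

/-!
Multiplying by `t + h + 1 > 0` and eliminating `γ`, the inequality becomes
`(t² + 2ts)(t + h + 1) < (t + s)((t + h)² + 2(t + h))`. The gap between the two sides is affine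
in `s`, so it suffices to check it at `s = 1`, where it is `h((t + 1)(t + h + 1) + 1)`, and at
`s = 2`, where it is `(h - t²) + h(t² + 2t + 3) + (t + 2)h²`; both are positive once `t² < h`,
and `t² ≤ (1/2)^{2(3/2)^j} < (1/2)^{(3/2)^{j+1}} = h`. A common point of the ray and the segment
would satisfy the hypotheses with `s = σ + 1` and equality in the conclusion.
-/

open Set

noncomputable section

/-- `(1/2)^{(3/2)^j}`, the length scale at step `j`. -/
def lscale (j : ℕ) : ℝ := ((1:ℝ)/2) ^ (((3:ℝ)/2) ^ j)

lemma lscale_pos (j : ℕ) : 0 < lscale j := by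
  unfold lscale; positivity

lemma sq_lscale_lt_lscale_succ (j : ℕ) : lscale j ^ 2 < lscale (j + 1) := by
  unfold lscale
  rw [← Real.rpow_natCast _ 2, ← Real.rpow_mul (by norm_num)]
  apply Real.rpow_lt_rpow_of_exponent_gt (by norm_num) (by norm_num)
  have hpow : (0:ℝ) < ((3:ℝ)/2) ^ j := by positivity
  rw [pow_succ]
  push_cast
  linarith

lemma sq_lt_lscale_succ {j : ℕ} {t : ℝ} (ht : t ∈ Icc 0 (lscale j)) : t ^ 2 < lscale (j + 1) :=
  (pow_le_pow_left₀ ht.1 ht.2 2).trans_lt (sq_lscale_lt_lscale_succ j)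

section RaySegment

variable {t h s γ : ℝ}

lemma segment_cross_lt_ray_cross (ht : -1 ≤ t) (hh : 0 < h) (hth : t ^ 2 < h)
    (hs : s ∈ Icc (1:ℝ) 2) :
    (t ^ 2 + 2 * t * s) * (t + h + 1) < (t + s) * ((t + h) ^ 2 + 2 * (t + h)) := by
  have gap_eq : (t + s) * ((t + h) ^ 2 + 2 * (t + h)) - (t ^ 2 + 2 * t * s) * (t + h + 1)
      = (2 - s) * (h * ((t + 1) * (t + h + 1) + 1))
        + (s - 1) * ((h - t ^ 2) + h * (t ^ 2 + 2 * t + 3) + (t + 2) * h ^ 2) := by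
    ring
  have gap_one : 0 < h * ((t + 1) * (t + h + 1) + 1) := by
    have : 0 ≤ (t + 1) * (t + h + 1) := by nlinarith
    positivity
  have gap_two : 0 < (h - t ^ 2) + h * (t ^ 2 + 2 * t + 3) + (t + 2) * h ^ 2 := by
    have : 0 < t ^ 2 + 2 * t + 3 := by nlinarith [sq_nonneg (t + 1)]
    have : 0 ≤ t + 2 := by linarith
    have : 0 < h - t ^ 2 := by linarith
    positivity
  nlinarith [hs.1, hs.2]

lemma ray_above_segment (ht : -1 ≤ t) (hh : 0 < h) (hth : t ^ 2 < h) (hs : s ∈ Icc (1:ℝ) 2)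
    (hmeet : t + s = γ * (t + h + 1)) :
    t ^ 2 + 2 * t * s < γ * ((t + h) ^ 2 + 2 * (t + h)) := by
  have hden : 0 < t + h + 1 := by linarith
  refine lt_of_mul_lt_mul_right ?_ hden.le
  calc (t ^ 2 + 2 * t * s) * (t + h + 1)
      < (t + s) * ((t + h) ^ 2 + 2 * (t + h)) := segment_cross_lt_ray_cross ht hh hth hs
    _ = γ * ((t + h) ^ 2 + 2 * (t + h)) * (t + h + 1) := by rw [hmeet]; ring

lemma disjoint_ray_segment (ht : -1 ≤ t) (hh : 0 < h) (hth : t ^ 2 < h) :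
    Disjoint
      {q : ℝ × ℝ | ∃ γ : ℝ, 0 < γ ∧ q = (γ * (t + h + 1), γ * ((t + h) ^ 2 + 2 * (t + h)))}
      {q : ℝ × ℝ | ∃ σ ∈ Icc (0:ℝ) 1, q = (σ * 1 + (t + 1), σ * (2 * t) + (t ^ 2 + 2 * t))} := by
  rw [Set.disjoint_left]
  rintro q ⟨γ, -, rfl⟩ ⟨σ, hσ, hq⟩
  obtain ⟨hfst, hsnd⟩ := Prod.ext_iff.mp hq
  have hs : σ + 1 ∈ Icc (1:ℝ) 2 := ⟨by linarith [hσ.1], by linarith [hσ.2]⟩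
  have hmeet : t + (σ + 1) = γ * (t + h + 1) := by simp only at hfst; linarith
  have := ray_above_segment ht hh hth hs hmeet
  simp only at hsnd
  linarith

end RaySegment

/-- **Separation of rays and tangent segments in the plane.** With
`h = (1/2)^{(3/2)^{j+1}}`: if `t ∈ [0, (1/2)^{(3/2)^j}]`, `s ∈ [1,2]`, `γ > 0` and
`t + s = γ(t + h + 1)`, then `γ((t+h)² + 2(t+h)) > t² + 2ts`; consequently the ray
`L_{1,t+h}` is disjoint from the segment `L_{2,t}`. -/
theorem ray_segment_separation (j : ℕ) :
    (∀ t s γ : ℝ, t ∈ Icc (0:ℝ) (lscale j) → s ∈ Icc (1:ℝ) 2 → 0 < γ →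
      t + s = γ * (t + lscale (j+1) + 1) →
      γ * ((t + lscale (j+1)) ^ 2 + 2 * (t + lscale (j+1))) > t ^ 2 + 2 * t * s) ∧
    (∀ t ∈ Icc (0:ℝ) (lscale j),
      Disjoint
        {q : ℝ × ℝ | ∃ γ : ℝ, 0 < γ ∧
          q = (γ * (t + lscale (j+1) + 1),
               γ * ((t + lscale (j+1)) ^ 2 + 2 * (t + lscale (j+1))))}
        {q : ℝ × ℝ | ∃ σ ∈ Icc (0:ℝ) 1,
          q = (σ * 1 + (t + 1), σ * (2 * t) + (t ^ 2 + 2 * t))}) := by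
  have ht_ge {t : ℝ} (ht : t ∈ Icc (0:ℝ) (lscale j)) : -1 ≤ t := by linarith [ht.1]
  refine ⟨fun t s γ ht hs _ hmeet => ?_, fun t ht => ?_⟩
  · exact ray_above_segment (ht_ge ht) (lscale_pos _) (sq_lt_lscale_succ ht) hs hmeet
  · exact disjoint_ray_segment (ht_ge ht) (lscale_pos _) (sq_lt_lscale_succ ht)
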